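/- Let V ⊆ ℝ^n be a regular space with capacity c, f a feasible flow, P a shortest augmenting path for f, and g the result of maximally augmenting f along P. Then the minimum length of an augmenting path for g (if one exists) is at least the minimum length of an augmenting path for f; i.e., shortest augmenting path length is nondecreasing over augmentations. -/

import Mathlib

open Finset

variable {n : ℕ}

/-- The support of a vector. -/
def supp (x : Fin n → ℝ) : Set (Fin n) := {j | x j ≠ 0}

/-- A nonzero vector of `V` is elementary if no nonzero vector of `V` has support
properly contained in its support. -/
def IsElementary (V : Submodule ℝ (Fin n → ℝ)) (x : Fin n → ℝ) : Prop :=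
  x ∈ V ∧ x ≠ 0 ∧ ∀ y ∈ V, y ≠ 0 → ¬ (supp y ⊂ supp x)

/-- A primitive vector: elementary with entries in `{-1, 0, 1}`. -/
def IsPrimitive (V : Submodule ℝ (Fin n → ℝ)) (x : Fin n → ℝ) : Prop :=
  IsElementary V x ∧ ∀ j, x j ∈ ({-1, 0, 1} : Set ℝ)

/-- `y` conforms to `x`. -/
def Conforms (y x : Fin n → ℝ) : Prop := ∀ j, y j ≠ 0 → y j * x j > 0

/-- A regular space: the kernel of a totally unimodular matrix. -/
def IsRegularSpace (V : Submodule ℝ (Fin n → ℝ)) : Prop :=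
  ∃ (m : ℕ) (A : Matrix (Fin m) (Fin n) ℝ),
    A.IsTotallyUnimodular ∧ V = LinearMap.ker A.mulVecLin

/-- An `r`-path: a primitive vector with value `+1` at `r`. -/
def IsRPath (V : Submodule ℝ (Fin n → ℝ)) (r : Fin n) (P : Fin n → ℝ) : Prop :=
  IsPrimitive V P ∧ P r = 1

/-- Feasibility with respect to capacity `c` (no constraint at `r`). -/
def Feasible (c : Fin n → ℝ) (r : Fin n) (f : Fin n → ℝ) : Prop :=
  ∀ j, j ≠ r → 0 ≤ f j ∧ f j ≤ c j

/-- An `r`-path `P` is augmenting for the flow `f`. -/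
def Augmenting (V : Submodule ℝ (Fin n → ℝ)) (c : Fin n → ℝ) (r : Fin n)
    (f P : Fin n → ℝ) : Prop :=
  IsRPath V r P ∧ ∃ ε : ℝ, 0 < ε ∧ Feasible c r (f + ε • P)

/-- The 1-norm. -/
def onorm (x : Fin n → ℝ) : ℝ := ∑ j, |x j|

/-- A shortest augmenting `r`-path. -/
def ShortestAug (V : Submodule ℝ (Fin n → ℝ)) (c : Fin n → ℝ) (r : Fin n)
    (f P : Fin n → ℝ) : Prop :=
  Augmenting V c r f P ∧ ∀ Q, Augmenting V c r f Q → onorm P ≤ onorm Q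

/-- `g` is obtained from `f` by maximal augmentation along `P`. -/
def MaxAug (c : Fin n → ℝ) (r : Fin n) (f P g : Fin n → ℝ) : Prop :=
  ∃ ε : ℝ, 0 < ε ∧ g = f + ε • P ∧ Feasible c r g ∧
    ∀ ε' : ℝ, ε < ε' → ¬ Feasible c r (f + ε' • P)

/-- A conformal primitive decomposition of `P + Q` in which `M` and `J` are the two
`r`-path summands (`M` playing the role of `P ∧ Q` and `J` of `P ∨ Q`). -/
def MeetJoinDecomp (V : Submodule ℝ (Fin n → ℝ)) (r : Fin n)
    (P Q M J : Fin n → ℝ) : Prop :=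
  ∃ (k : ℕ) (p : Fin k → Fin n → ℝ) (a b : Fin k),
    (∀ i, IsPrimitive V (p i)) ∧ (∀ i, Conforms (p i) (P + Q)) ∧
    (∑ i, p i) = P + Q ∧ a ≠ b ∧ p a = M ∧ p b = J ∧
    p a r = 1 ∧ p b r = 1 ∧ ∀ i, p i r = 1 → i = a ∨ i = b


/-!
Decompose `P + Q` conformally as `∑ αᵢ pᵢ` with `αᵢ > 0` and primitive `pᵢ`. This is possible in a
regular space because, by Cramer's rule and total unimodularity, every elementary vector is a
multiple of a `{-1, 0, 1}`-vector. As `(P + Q) r = 2`, the summands with `pᵢ r = 1` are `r`-paths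
whose weights add up to `2`. Each of them is augmenting for `f`: augmenting `f` along `P` and then
`g` along `Q` leaves slack at every coordinate `j ≠ r` in the direction of the sign of `(P + Q) j`,
and `pᵢ` only moves in those directions. So each has length at least `‖P‖₁`, and since the 1-norm is
additive over a conformal sum, `2 ‖P‖₁ ≤ ‖P + Q‖₁ ≤ ‖P‖₁ + ‖Q‖₁`.
-/

namespace Matrix

theorem exists_submatrix_det_ne_zero_of_linearIndependent_col {K m ι : Type*} [Field K]
    [Fintype m] [Fintype ι] [DecidableEq ι] {M : Matrix m ι K} (hM : LinearIndependent K M.col) :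
    ∃ R : ι → m, (M.submatrix R id).det ≠ 0 := by
  obtain ⟨κ, a, -, hspan, hli⟩ := exists_linearIndependent' K M.row
  have : Fintype κ := @Fintype.ofFinite κ hli.finite
  have hcard : Fintype.card ι = Fintype.card κ := by
    rw [linearIndependent_iff_card_eq_finrank_span.mp hli, Set.finrank, hspan,
      ← rank_eq_finrank_span_row, ← rank_transpose]
    exact (LinearIndependent.rank_matrix (M := Mᵀ) hM).symm
  refine ⟨a ∘ Fintype.equivOfCardEq hcard, ?_⟩
  rw [← isUnit_iff_ne_zero, ← isUnit_iff_isUnit_det, ← linearIndependent_rows_iff_isUnit]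
  exact hli.comp _ (Fintype.equivOfCardEq hcard).injective

/-- Cramer's rule: the `k`-th entry of the solution is `a` times a ratio of two minors of `A`. -/
theorem IsTotallyUnimodular.exists_sign_mul_of_mulVec_eq_smul_col {K m n ι : Type*} [Field K]
    [Fintype ι] [DecidableEq ι] {A : Matrix m n K} (hA : A.IsTotallyUnimodular)
    {R : ι → m} {C : ι → n} (hdet : (A.submatrix R C).det ≠ 0) {y : ι → K} {a : K} {j₀ : n}
    (hy : A.submatrix R C *ᵥ y = a • fun i => A (R i) j₀) (k : ι) :
    ∃ s : SignType, y k = s * a := by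
  classical
  set B := A.submatrix R C
  obtain ⟨t, ht⟩ : B.det ∈ Set.range SignType.cast :=
    (isTotallyUnimodular_iff_fintype A).mp hA ι R C
  obtain ⟨u, hu⟩ := (isTotallyUnimodular_iff_fintype A).mp hA ι R (Function.update C k j₀)
  have hcol : B.updateCol k (fun i => A (R i) j₀) = A.submatrix R (Function.update C k j₀) := by
    ext i l
    by_cases hl : l = k
    · subst hl; simp [B]
    · simp [B, updateCol_ne hl, Function.update_of_ne hl]
  have hcramer : B.det • y = a • B.cramer fun i => A (R i) j₀ := by
    rw [← map_smul, cramer_eq_adjugate_mulVec, ← hy, mulVec_mulVec, adjugate_mul, smul_mulVec,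
      one_mulVec]
  have hk := congrFun hcramer k
  simp only [Pi.smul_apply, smul_eq_mul, cramer_apply, hcol, ← ht, ← hu] at hk
  have htt : (t : K) * t = 1 := by
    have ht0 : (t : K) ≠ 0 := ht ▸ hdet
    rcases t with _ | _ | _ <;> simp at ht0 ⊢
  refine ⟨t * u, ?_⟩
  rw [SignType.coe_mul]
  linear_combination (t : K) * hk - y k * htt

theorem mulVec_dite_eq_submatrix_mulVec {m n R : Type*} [Fintype n] [NonUnitalNonAssocSemiring R]
    (A : Matrix m n R) (p : n → Prop) [DecidablePred p] (y : Subtype p → R) :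
    A *ᵥ (fun j => if h : p j then y ⟨j, h⟩ else 0) = A.submatrix id Subtype.val *ᵥ y := by
  ext i
  simp only [mulVec, dotProduct, submatrix_apply, id]
  rw [← Fintype.sum_subtype_add_sum_subtype p]
  have h₁ (k : Subtype p) : A i k * (if h : p k then y ⟨k, h⟩ else 0) = A i k * y k := by
    rw [dif_pos k.2]
  have h₂ (k : {k // ¬p k}) : A i k * (if h : p k then y ⟨k, h⟩ else 0) = 0 := by
    rw [dif_neg k.2, mul_zero]
  simp only [h₁, h₂, sum_const_zero, add_zero]

end Matrix

open Matrix

section Conformity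

variable {x y z : Fin n → ℝ}

lemma supp_smul {a : ℝ} (ha : a ≠ 0) (x : Fin n → ℝ) : supp (a • x) = supp x := by
  ext j
  simp [supp, ha]

lemma Conforms.supp_subset (h : Conforms y x) : supp y ⊆ supp x := by
  intro j hj hx
  simpa [hx] using h j hj

lemma Conforms.trans (hxy : Conforms x y) (hyz : Conforms y z) : Conforms x z := by
  intro j hj
  have h₁ := hxy j hj
  have hy : y j ≠ 0 := by
    rintro h
    simp [h] at h₁
  have h₂ : 0 < x j * z j * (y j * y j) := by
    linarith [mul_pos h₁ (hyz j hy)]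
  exact pos_of_mul_pos_left h₂ (mul_self_nonneg _)

lemma Conforms.mul_eq_abs_mul_abs (h : Conforms y x) (j : Fin n) : y j * x j = |y j| * |x j| := by
  rw [← abs_mul]
  rcases eq_or_ne (y j) 0 with hy | hy
  · simp [hy]
  · exact (abs_of_pos (h j hy)).symm

lemma conforms_smul_self {a : ℝ} (ha : 0 < a) (x : Fin n → ℝ) : Conforms (a • x) x := by
  intro j hj
  have hx : x j ≠ 0 := by
    rintro h
    simp [h] at hj
  simpa [mul_assoc] using mul_pos ha (mul_self_pos.2 hx)

lemma conforms_sub_of_abs_le (h : ∀ j, |z j| ≤ |x j|) : Conforms (x - z) x := by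
  intro j hj
  have hx : x j ≠ 0 := by
    intro hx
    have hz : z j = 0 := by simpa [hx] using h j
    simp [hx, hz] at hj
  have hle : z j * x j ≤ x j * x j :=
    calc z j * x j ≤ |z j| * |x j| := by rw [← abs_mul]; exact le_abs_self _
      _ ≤ |x j| * |x j| := mul_le_mul_of_nonneg_right (h j) (abs_nonneg _)
      _ = x j * x j := abs_mul_abs_self _
  refine lt_of_le_of_ne ?_ (mul_ne_zero hj hx).symm
  simp only [Pi.sub_apply]
  nlinarith

/-- Take `t = x j / y j` for `j` minimising `|x j| / |y j|` over `supp y`. -/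
lemma exists_sub_smul_conforms (hy : y ≠ 0) (hyx : supp y ⊆ supp x) :
    ∃ (t : ℝ) (j : Fin n), y j ≠ 0 ∧ x j = t * y j ∧
      Conforms (x - t • y) x ∧ supp (x - t • y) ⊂ supp x := by
  classical
  obtain ⟨j, hjy, hmin⟩ := (univ.filter (y · ≠ 0)).exists_min_image (fun j => |x j| / |y j|)
    (by simpa [Finset.filter_nonempty_iff, Function.ne_iff] using hy)
  simp only [Finset.mem_filter, Finset.mem_univ, true_and] at hjy hmin
  have hxt : x j = x j / y j * y j := (div_mul_cancel₀ _ hjy).symm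
  have hconf : Conforms (x - (x j / y j) • y) x := by
    refine conforms_sub_of_abs_le fun i => ?_
    rcases eq_or_ne (y i) 0 with hyi | hyi
    · simp [hyi]
    · have := hmin i hyi
      rw [le_div_iff₀ (abs_pos.2 hyi)] at this
      simpa [abs_mul, abs_div] using this
  refine ⟨x j / y j, j, hjy, hxt, hconf,
    (Set.ssubset_iff_of_subset hconf.supp_subset).2 ⟨j, hyx hjy, ?_⟩⟩
  simp [supp, ← hxt]

end Conformity

section RegularSpace

variable {V : Submodule ℝ (Fin n → ℝ)} {x : Fin n → ℝ}

theorem IsElementary.linearIndependent_col {m : Type*} {A : Matrix m (Fin n) ℝ}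
    (hx : IsElementary (LinearMap.ker A.mulVecLin) x) {j₀ : Fin n} (hj₀ : x j₀ ≠ 0) :
    LinearIndependent ℝ (A.submatrix id (Subtype.val : {k // k ≠ j₀ ∧ x k ≠ 0} → Fin n)).col := by
  classical
  rw [← mulVec_injective_iff, ← coe_mulVecLin, injective_iff_map_eq_zero]
  intro y hy
  set z : Fin n → ℝ := fun k => if h : k ≠ j₀ ∧ x k ≠ 0 then y ⟨k, h⟩ else 0
  have hzA : z ∈ LinearMap.ker A.mulVecLin := by
    rw [LinearMap.mem_ker, mulVecLin_apply, mulVec_dite_eq_submatrix_mulVec]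
    exact hy
  have hz : z = 0 := by
    by_contra hz
    refine hx.2.2 z hzA hz ((Set.ssubset_iff_of_subset ?_).2 ⟨j₀, hj₀, by simp [supp, z]⟩)
    intro k hk hxk
    simp [supp, z, hxk] at hk
  ext ⟨k, hk⟩
  simpa [z, hk] using congrFun hz k

/-- Some nonsingular square submatrix of the independent columns of `A` on `supp x \ {j₀}`
determines `x` from `x j₀` by Cramer's rule, and total unimodularity makes the solution `±x j₀`. -/
theorem IsElementary.abs_eq_of_ne_zero {m : Type*} [Fintype m] {A : Matrix m (Fin n) ℝ}
    (hA : A.IsTotallyUnimodular) (hx : IsElementary (LinearMap.ker A.mulVecLin) x)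
    {j₀ j : Fin n} (hj₀ : x j₀ ≠ 0) (hj : x j ≠ 0) : |x j| = |x j₀| := by
  classical
  rcases eq_or_ne j j₀ with rfl | hjj₀
  · rfl
  let p : Fin n → Prop := fun k => k ≠ j₀ ∧ x k ≠ 0
  obtain ⟨R, hR⟩ :=
    exists_submatrix_det_ne_zero_of_linearIndependent_col (hx.linearIndependent_col hj₀)
  rw [submatrix_submatrix] at hR
  have hsol : A.submatrix R Subtype.val *ᵥ (fun k : Subtype p => x k) =
      (-x j₀) • fun i => A (R i) j₀ := by
    have hx' : (fun k => if h : p k then x k else 0) = x - x j₀ • Pi.single j₀ 1 := by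
      ext k
      by_cases hk : k = j₀ <;> by_cases hxk : x k = 0 <;> simp [p, hk, hxk]
    ext i
    have := congrFun (mulVec_dite_eq_submatrix_mulVec A p (fun k => x k)) (R i)
    rw [hx', mulVec_sub, mulVec_smul, mulVec_single_one, show A *ᵥ x = 0 from hx.1] at this
    rw [show (A.submatrix R Subtype.val *ᵥ fun k : Subtype p => x k) i =
      (A.submatrix id Subtype.val *ᵥ fun k : Subtype p => x k) (R i) from rfl, ← this]
    simp
  obtain ⟨s, hs⟩ := hA.exists_sign_mul_of_mulVec_eq_smul_col hR hsol ⟨j, hjj₀, hj⟩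
  simp only at hs
  rw [hs] at hj ⊢
  rcases s with _ | _ | _ <;> simp at hj ⊢

theorem IsElementary.isPrimitive_abs_inv_smul (hV : IsRegularSpace V) (hx : IsElementary V x)
    {j₀ : Fin n} (hj₀ : x j₀ ≠ 0) : IsPrimitive V (|x j₀|⁻¹ • x) := by
  obtain ⟨m, A, hA, rfl⟩ := hV
  have ha : |x j₀|⁻¹ ≠ 0 := inv_ne_zero (abs_ne_zero.2 hj₀)
  refine ⟨⟨Submodule.smul_mem _ _ hx.1, smul_ne_zero ha hx.2.1, ?_⟩, fun j => ?_⟩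
  · rw [supp_smul ha]
    exact hx.2.2
  rcases eq_or_ne (x j) 0 with h | h
  · simp [h]
  · have habs : |(|x j₀|⁻¹ • x) j| = 1 := by
      simp [abs_mul, hx.abs_eq_of_ne_zero hA hj₀ h, hj₀]
    rcases (abs_eq zero_le_one).1 habs with h' | h' <;> simp [h']

lemma IsPrimitive.apply_eq_zero_or_one_of_conforms {p : Fin n → ℝ} (hp : IsPrimitive V p)
    (hpx : Conforms p x) {j : Fin n} (hxj : 0 < x j) : p j = 0 ∨ p j = 1 := by
  rcases hp.2 j with h | h | h
  · have := hpx j (by simp [h])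
    simp only [h] at this
    linarith
  · exact .inl h
  · exact .inr h

theorem exists_isPrimitive_conforms (hV : IsRegularSpace V) (hx : x ∈ V)
    (hx0 : x ≠ 0) : ∃ p, IsPrimitive V p ∧ Conforms p x := by
  induction hN : (supp x).ncard using Nat.strong_induction_on generalizing x with
  | _ N ih =>
  by_cases helem : IsElementary V x
  · obtain ⟨j₀, hj₀⟩ := Function.ne_iff.1 hx0
    exact ⟨_, helem.isPrimitive_abs_inv_smul hV hj₀,
      conforms_smul_self (inv_pos.2 (abs_pos.2 hj₀)) x⟩
  obtain ⟨y, hyV, hy0, hyx⟩ : ∃ y ∈ V, y ≠ 0 ∧ supp y ⊂ supp x := by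
    simpa [IsElementary, hx, hx0] using helem
  obtain ⟨t, -, -, -, hconf, hlt⟩ := exists_sub_smul_conforms hy0 hyx.subset
  have hne : x - t • y ≠ 0 := by
    obtain ⟨j, hjx, hjy⟩ := Set.exists_of_ssubset hyx
    have hyj : y j = 0 := by simpa [supp] using hjy
    intro h
    exact hjx (by simpa [hyj] using congrFun h j)
  obtain ⟨p, hp, hpc⟩ := ih _ (hN ▸ Set.ncard_lt_ncard hlt)
    (sub_mem hx (Submodule.smul_mem _ _ hyV)) hne rfl
  exact ⟨p, hp, hpc.trans hconf⟩

theorem exists_conformal_decomposition (hV : IsRegularSpace V) (hx : x ∈ V) :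
    ∃ (k : ℕ) (α : Fin k → ℝ) (p : Fin k → Fin n → ℝ), (∀ i, 0 < α i) ∧
      (∀ i, IsPrimitive V (p i)) ∧ (∀ i, Conforms (p i) x) ∧ x = ∑ i, α i • p i := by
  induction hN : (supp x).ncard using Nat.strong_induction_on generalizing x with
  | _ N ih =>
  rcases eq_or_ne x 0 with rfl | hx0
  · exact ⟨0, finZeroElim, finZeroElim, finZeroElim, finZeroElim, finZeroElim, by simp⟩
  obtain ⟨p, hp, hpx⟩ := exists_isPrimitive_conforms hV hx hx0
  obtain ⟨t, j, hpj, hxj, hconf, hlt⟩ := exists_sub_smul_conforms hp.1.2.1 hpx.supp_subset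
  have ht : 0 < t := by
    have := hpx j hpj
    rw [hxj, mul_left_comm] at this
    exact pos_of_mul_pos_left this (mul_self_nonneg _)
  obtain ⟨k, α, q, hα, hq, hqc, hsum⟩ := ih _ (hN ▸ Set.ncard_lt_ncard hlt)
    (sub_mem hx (Submodule.smul_mem _ _ hp.1.1)) rfl
  refine ⟨k + 1, Fin.cons t α, Fin.cons p q, Fin.forall_fin_succ.2 ⟨ht, hα⟩,
    Fin.forall_fin_succ.2 ⟨hp, hq⟩, Fin.forall_fin_succ.2 ⟨hpx, fun i => (hqc i).trans hconf⟩, ?_⟩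
  rw [Fin.sum_univ_succ, Fin.cons_zero, Fin.cons_zero]
  simp only [Fin.cons_succ]
  rw [← hsum]
  abel

end RegularSpace

section Flows

open Filter Topology

variable {c : Fin n → ℝ} {r : Fin n} {f v w : Fin n → ℝ}

def HasSlackAlong (c : Fin n → ℝ) (r : Fin n) (f w : Fin n → ℝ) : Prop :=
  ∀ j, j ≠ r → (0 < w j → f j < c j) ∧ (w j < 0 → 0 < f j)

lemma HasSlackAlong.of_conforms (h : HasSlackAlong c r f w) (hv : Conforms v w) :
    HasSlackAlong c r f v := by
  intro j hj
  refine ⟨fun hvj => (h j hj).1 ?_, fun hvj => (h j hj).2 ?_⟩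
  · exact (pos_iff_pos_of_mul_pos (hv j hvj.ne')).1 hvj
  · exact (neg_iff_neg_of_mul_pos (hv j hvj.ne)).1 hvj

lemma HasSlackAlong.exists_feasible_add_smul (hs : HasSlackAlong c r f v) (hf : Feasible c r f) :
    ∃ ε : ℝ, 0 < ε ∧ Feasible c r (f + ε • v) := by
  have hcoord : ∀ j, j ≠ r → ∀ᶠ ε in 𝓝[>] (0 : ℝ), 0 ≤ f j + ε * v j ∧ f j + ε * v j ≤ c j := by
    intro j hj
    have hlim : Tendsto (fun ε : ℝ => f j + ε * v j) (𝓝[>] 0) (𝓝 (f j)) :=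
      ((continuous_const.add (continuous_id.mul continuous_const)).tendsto' 0 _ (by simp)).mono_left
        nhdsWithin_le_nhds
    obtain ⟨hf₀, hfc⟩ := hf j hj
    rcases lt_trichotomy (v j) 0 with hv | hv | hv
    · filter_upwards [hlim.eventually (lt_mem_nhds ((hs j hj).2 hv)), self_mem_nhdsWithin]
        with ε h₁ (h₂ : 0 < ε)
      constructor <;> nlinarith
    · simp [hv, hf₀, hfc]
    · filter_upwards [hlim.eventually (gt_mem_nhds ((hs j hj).1 hv)), self_mem_nhdsWithin]
        with ε h₁ (h₂ : 0 < ε)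
      constructor <;> nlinarith
  have hall : ∀ᶠ ε in 𝓝[>] (0 : ℝ), 0 < ε ∧ Feasible c r (f + ε • v) := by
    refine eventually_mem_nhdsWithin.and ?_
    exact Filter.eventually_all.2 fun j => Filter.eventually_imp_distrib_left.2 (hcoord j)
  exact hall.exists

lemma hasSlackAlong_add_of_feasible {P Q : Fin n → ℝ} {ε δ : ℝ} (hε : 0 < ε) (hδ : 0 < δ)
    (hP : ∀ j, P j ∈ ({-1, 0, 1} : Set ℝ)) (hQ : ∀ j, Q j ∈ ({-1, 0, 1} : Set ℝ))
    (hfP : Feasible c r (f + ε • P)) (hfPQ : Feasible c r (f + ε • P + δ • Q)) :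
    HasSlackAlong c r f (P + Q) := by
  intro j hj
  have h₁ := hfP j hj
  have h₂ := hfPQ j hj
  simp only [Pi.add_apply, Pi.smul_apply, smul_eq_mul] at h₁ h₂ ⊢
  simp only [Set.mem_insert_iff, Set.mem_singleton_iff] at hP hQ
  rcases hP j with h | h | h <;> rcases hQ j with h' | h' | h' <;>
    simp only [h, h'] at h₁ h₂ ⊢ <;> constructor <;> intro <;> linarith

end Flows

lemma onorm_nonneg (x : Fin n → ℝ) : 0 ≤ onorm x :=
  sum_nonneg fun _ _ => abs_nonneg _

lemma onorm_add_le (x y : Fin n → ℝ) : onorm (x + y) ≤ onorm x + onorm y := by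
  unfold onorm
  rw [← sum_add_distrib]
  exact sum_le_sum fun _ _ => abs_add_le _ _

lemma onorm_eq_sum_of_conforms {ι : Type*} [Fintype ι] {α : ι → ℝ} {p : ι → Fin n → ℝ}
    {x : Fin n → ℝ} (hp : ∀ i, Conforms (p i) x) (hx : x = ∑ i, α i • p i) :
    onorm x = ∑ i, α i * onorm (p i) := by
  have hcoord : ∀ j, |x j| = ∑ i, α i * |p i j| := by
    intro j
    have hxj : x j = ∑ i, α i * p i j := by
      rw [hx]
      simp [Finset.sum_apply]
    rcases eq_or_ne (x j) 0 with h0 | h0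
    · have hpj : ∀ i, p i j = 0 := fun i => by_contra fun h => by simpa [h0] using hp i j h
      simp [h0, hpj]
    · refine mul_right_cancel₀ (abs_ne_zero.2 h0) ?_
      calc |x j| * |x j| = x j * x j := abs_mul_abs_self _
        _ = ∑ i, α i * (p i j * x j) := by
          rw [hxj, Finset.sum_mul]
          simp only [mul_assoc]
        _ = (∑ i, α i * |p i j|) * |x j| := by
          simp only [(hp _).mul_eq_abs_mul_abs, Finset.sum_mul, mul_assoc]
  simp only [onorm, hcoord, Finset.mul_sum]
  exact Finset.sum_comm

lemma mul_le_onorm_of_conformal_decomposition {ι : Type*} [Fintype ι] {α : ι → ℝ}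
    {p : ι → Fin n → ℝ} {x : Fin n → ℝ} {r : Fin n} {L : ℝ} (hα : ∀ i, 0 ≤ α i)
    (hp : ∀ i, Conforms (p i) x) (hx : x = ∑ i, α i • p i) (hr : ∀ i, p i r = 0 ∨ p i r = 1)
    (hL : ∀ i, p i r = 1 → L ≤ onorm (p i)) : x r * L ≤ onorm x :=
  calc x r * L = ∑ i, α i * p i r * L := by
        conv_lhs => rw [hx]
        simp [Finset.sum_apply, Finset.sum_mul]
    _ ≤ ∑ i, α i * onorm (p i) := by
        refine sum_le_sum fun i _ => ?_
        rcases hr i with h | h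
        · simpa [h] using mul_nonneg (hα i) (onorm_nonneg _)
        · simpa [h] using mul_le_mul_of_nonneg_left (hL i h) (hα i)
    _ = onorm x := (onorm_eq_sum_of_conforms hp hx).symm

theorem stmt19_general (V : Submodule ℝ (Fin n → ℝ)) (hV : IsRegularSpace V)
    (r : Fin n) (c : Fin n → ℝ)
    (f g P : Fin n → ℝ) (hf : Feasible c r f)
    (hP : ShortestAug V c r f P) (hg : MaxAug c r f P g) :
    ∀ Q, ShortestAug V c r g Q → onorm P ≤ onorm Q := by
  rintro Q ⟨⟨⟨hQ, hQr⟩, δ, hδ, hgQ⟩, -⟩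
  obtain ⟨⟨⟨hP, hPr⟩, -⟩, hPmin⟩ := hP
  obtain ⟨ε, hε, rfl, hfP, -⟩ := hg
  have hslack := hasSlackAlong_add_of_feasible hε hδ hP.2 hQ.2 hfP hgQ
  obtain ⟨k, α, p, hα, hp, hpc, hsum⟩ :=
    exists_conformal_decomposition hV (add_mem hP.1.1 hQ.1.1)
  have hr : (P + Q) r = 2 := by
    rw [Pi.add_apply, hPr, hQr]
    norm_num
  have hlen : ∀ i, p i r = 1 → onorm P ≤ onorm (p i) := fun i hi =>
    hPmin _ ⟨⟨hp i, hi⟩, (hslack.of_conforms (hpc i)).exists_feasible_add_smul hf⟩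
  have hPQ := mul_le_onorm_of_conformal_decomposition (fun i => (hα i).le) hpc hsum
    (fun i => (hp i).apply_eq_zero_or_one_of_conforms (hpc i) (by rw [hr]; norm_num)) hlen
  rw [hr] at hPQ
  linarith [onorm_add_le P Q]

theorem stmt19 (V : Submodule ℝ (Fin n → ℝ)) (hV : IsRegularSpace V)
    (r : Fin n) (c : Fin n → ℝ) (hc : ∀ j, j ≠ r → 0 ≤ c j)
    (f g P : Fin n → ℝ) (hfV : f ∈ V) (hf : Feasible c r f)
    (hP : ShortestAug V c r f P) (hg : MaxAug c r f P g) :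
    ∀ Q, ShortestAug V c r g Q → onorm P ≤ onorm Q :=
  stmt19_general V hV r c f g P hf hP hg
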